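/- Let B be an affine set in general position on S², g ≠ id a symmetry of B, and H a closed hemisphere with g(B ∩ H) = B ∩ H. Then B ⊆ H or B ⊆ −H. -/

import Mathlib

/-!
Suppose `B` has points strictly on both sides of the plane `⟪v, ·⟫ = 0`. Exactly one edge
`[c, d]` of the boundary of the cone over `B`, oriented with `B` on its left, leaves the closed
half-space `H = {0 ≤ ⟪v, ·⟫}`; a symmetry preserving `B ∩ H` permutes such edges, so `g` fixes
`c ∈ H` and `d ∉ H`. Each of `B ∩ H` and `B \ H` is `g`-stable and lies in an open half-space
bounded by a plane through the fixed point on the other side. About that fixed point, an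
orientation-preserving permutation turns all the points it moves in one sense, which is
impossible inside a half-space, so `g` would be the identity.
-/

open scoped RealInnerProductSpace

noncomputable section

abbrev E3 := EuclideanSpace ℝ (Fin 3)

/-- Determinant of the 3×3 matrix whose rows are `p`, `q`, `r`. -/
def det3 (p q r : E3) : ℝ := Matrix.det (Matrix.of ![fun i => p i, fun i => q i, fun i => r i])

/-- The orientation `sgn(p,q,r)` of a triple of points: the sign of `det3 p q r`. -/
def sgn3 (p q r : E3) : ℝ := Real.sign (det3 p q r)

/-- An affine set: a finite subset of the unit sphere contained in an open hemisphere. -/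
def IsAffineSet (A : Set E3) : Prop :=
  A.Finite ∧ A ⊆ Metric.sphere (0 : E3) 1 ∧ ∃ v : E3, ∀ p ∈ A, 0 < ⟪v, p⟫

/-- General position for an affine set: no three of its points are coplanar with the origin. -/
def GenPos (A : Set E3) : Prop :=
  ∀ p ∈ A, ∀ q ∈ A, ∀ r ∈ A, p ≠ q → p ≠ r → q ≠ r → det3 p q r ≠ 0

/-- `p` is extreme in `A`: some great circle strictly separates `p` from `A \ {p}`. -/
def IsExtremePt (p : E3) (A : Set E3) : Prop :=
  ∃ v : E3, 0 < ⟪v, p⟫ ∧ ∀ q ∈ A, q ≠ p → ⟪v, q⟫ < 0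

/-- `f` preserves orientations on `S`. -/
def OrientationPreservingOn (f : E3 → E3) (S : Set E3) : Prop :=
  ∀ p ∈ S, ∀ q ∈ S, ∀ r ∈ S, sgn3 (f p) (f q) (f r) = sgn3 p q r

lemma Set.BijOn.apply_mem_iff_of_image_inter_eq {α : Type*} {f : α → α} {s t : Set α}
    (hf : Set.BijOn f s s) (ht : f '' (s ∩ t) = s ∩ t) {x : α} (hx : x ∈ s) :
    f x ∈ t ↔ x ∈ t := by
  have := hf.injOn.mem_image_iff (Set.inter_subset_left (t := t)) hx
  rw [ht] at this
  simpa [hx, hf.mapsTo hx] using this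

lemma inner_eq_coords (x y : E3) : ⟪x, y⟫ = x 0 * y 0 + x 1 * y 1 + x 2 * y 2 := by
  simp [PiLp.inner_apply, RCLike.inner_apply, Fin.sum_univ_three, mul_comm]

lemma det3_eq_coords (p q r : E3) :
    det3 p q r = p 0 * (q 1 * r 2 - q 2 * r 1) - p 1 * (q 0 * r 2 - q 2 * r 0)
      + p 2 * (q 0 * r 1 - q 1 * r 0) := by
  simp [det3, Matrix.det_fin_three]; ring

lemma det3_swap_right (p q r : E3) : det3 p r q = -det3 p q r := by
  simp only [det3_eq_coords]; ring

lemma det3_swap_left (p q r : E3) : det3 q p r = -det3 p q r := by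
  simp only [det3_eq_coords]; ring

lemma det3_rotate (p q r : E3) : det3 q r p = det3 p q r := by
  simp only [det3_eq_coords]; ring

lemma det3_smul_add_smul (a b : ℝ) (p q x y : E3) :
    det3 p q (a • x + b • y) = a * det3 p q x + b * det3 p q y := by
  simp only [det3_eq_coords, PiLp.add_apply, PiLp.smul_apply, smul_eq_mul]; ring

lemma det3_self_first_third (p q : E3) : det3 p q p = 0 := by
  simp only [det3_eq_coords]; ring

lemma det3_self_second_third (p q : E3) : det3 p q q = 0 := by
  simp only [det3_eq_coords]; ring

lemma det3_mul_inner_self (w z x y : E3) :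
    det3 z x y * ⟪w, w⟫
      = ⟪w, z⟫ * det3 w x y + ⟪w, y⟫ * det3 w z x - ⟪w, x⟫ * det3 w z y := by
  simp only [det3_eq_coords, inner_eq_coords]; ring

/-- For `w ⊥ z`, up to the factor `‖z‖`, the tangent of the angle about the axis `z` on the
half-space `⟪w, ·⟫ > 0`, measured from the half-plane spanned by `z` and `w`. -/
def slopeAbout (w z x : E3) : ℝ := det3 w z x / ⟪w, x⟫

lemma slopeAbout_smul (w z x : E3) {a : ℝ} (ha : a ≠ 0) :
    slopeAbout w z (a • x) = slopeAbout w z x := by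
  have h := det3_smul_add_smul a 0 w z x 0
  simp only [zero_smul, add_zero, zero_mul] at h
  rw [slopeAbout, slopeAbout, h, real_inner_smul_right, mul_div_mul_left _ _ ha]

lemma slopeAbout_lt_slopeAbout_iff {w z x y : E3} (hwz : ⟪w, z⟫ = 0)
    (hx : 0 < ⟪w, x⟫) (hy : 0 < ⟪w, y⟫) :
    slopeAbout w z y < slopeAbout w z x ↔ 0 < det3 z x y := by
  have hw : 0 < ⟪w, w⟫ := real_inner_self_pos.mpr fun h => by simp [h] at hx
  have key : det3 w z x * ⟪w, y⟫ - det3 w z y * ⟪w, x⟫ = det3 z x y * ⟪w, w⟫ := by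
    rw [det3_mul_inner_self, hwz]; ring
  rw [slopeAbout, slopeAbout, div_lt_div_iff₀ hy hx, ← sub_pos, key, mul_pos_iff_of_pos_right hw]

lemma Real.sign_eq_one_iff {r : ℝ} : Real.sign r = 1 ↔ 0 < r := by
  refine ⟨fun h => ?_, Real.sign_of_pos⟩
  rcases lt_trichotomy r 0 with hr | rfl | hr
  · rw [Real.sign_of_neg hr] at h; norm_num at h
  · rw [Real.sign_zero] at h; norm_num at h
  · exact hr

lemma OrientationPreservingOn.det3_pos {g : E3 → E3} {B : Set E3}
    (hpres : OrientationPreservingOn g B) {p q r : E3} (hp : p ∈ B) (hq : q ∈ B) (hr : r ∈ B)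
    (h : 0 < det3 p q r) : 0 < det3 (g p) (g q) (g r) := by
  have := hpres p hp q hq r hr
  rw [sgn3, sgn3, Real.sign_of_pos h] at this
  exact Real.sign_eq_one_iff.mp this

/-- Orientation preservation makes all moved points of `S` turn about `z` in the same sense, so
`g` and `g⁻¹` move such a point in opposite senses; at one of maximal slope about `z` both would
have to lower the slope. -/
lemma apply_eq_self_of_halfspace_through_fixed_point {B S : Set E3} {g : E3 → E3}
    (hfin : B.Finite) (hgp : GenPos B) (hbij : Set.BijOn g B B)
    (hpres : OrientationPreservingOn g B) (hS : ∀ x ∈ B, g x ∈ S ↔ x ∈ S)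
    {z w : E3} (hz : z ∈ B) (hgz : g z = z) (hwz : ⟪w, z⟫ = 0)
    (hw : ∀ x ∈ B, x ∈ S → 0 < ⟪w, x⟫) :
    ∀ p ∈ B, p ∈ S → g p = p := by
  intro p hp hpS
  by_contra hmoved
  set M := {x ∈ B | x ∈ S ∧ g x ≠ x}
  have hgM : ∀ x ∈ M, g x ∈ M := fun x ⟨hxB, hxS, hgx⟩ =>
    ⟨hbij.mapsTo hxB, (hS x hxB).mpr hxS, fun h => hgx (hbij.injOn (hbij.mapsTo hxB) hxB h)⟩
  have hturn : ∀ x ∈ M, ∀ x' ∈ M, x ≠ x' →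
      slopeAbout w z x ≤ slopeAbout w z x' → 0 < det3 z x' x := by
    intro x ⟨hxB, hxS, hgx⟩ x' ⟨hx'B, hx'S, hgx'⟩ hne hle
    have hzx : z ≠ x := fun h => hgx (h ▸ hgz)
    have hzx' : z ≠ x' := fun h => hgx' (h ▸ hgz)
    rcases (hgp z hz x' hx'B x hxB hzx' hzx hne.symm).lt_or_gt with h | h
    · have := (slopeAbout_lt_slopeAbout_iff hwz (hw x hxB hxS) (hw x' hx'B hx'S)).mpr
        (by rw [det3_swap_right]; linarith)
      linarith
    · exact h
  obtain ⟨q, hqM, hmax⟩ := Set.exists_max_image M (slopeAbout w z)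
    (hfin.subset fun x hx => hx.1) ⟨p, hp, hpS, hmoved⟩
  obtain ⟨y, hyB, rfl⟩ := hbij.surjOn hqM.1
  have hyM : y ∈ M := ⟨hyB, (hS y hyB).mp hqM.2.1, fun h => hqM.2.2 (by rw [h, h])⟩
  have hforward : 0 < det3 z (g y) (g (g y)) :=
    hturn _ (hgM _ hqM) _ hqM hqM.2.2 (hmax _ (hgM _ hqM))
  have hbackward : 0 < det3 z (g y) y := hturn _ hyM _ hqM hyM.2.2.symm (hmax _ hyM)
  have := hpres.det3_pos hz hqM.1 hyB hbackward
  rw [hgz, det3_swap_right] at this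
  linarith

/-- Up to a positive factor when `0 ≤ ⟪v, c⟫` and `⟪v, d⟫ < 0`, the point where the segment
`[c, d]` meets the plane `⟪v, ·⟫ = 0`. -/
def crossingPoint (v c d : E3) : E3 := (-⟪v, d⟫) • c + ⟪v, c⟫ • d

lemma inner_crossingPoint (v c d : E3) : ⟪v, crossingPoint v c d⟫ = 0 := by
  simp only [crossingPoint, inner_add_right, real_inner_smul_right]; ring

lemma det3_crossingPoint (v c d y : E3) :
    det3 (crossingPoint v c d) y v = ⟪v, v⟫ * det3 c d y - det3 c d v * ⟪v, y⟫ := by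
  simp only [crossingPoint, det3_eq_coords, inner_eq_coords, PiLp.add_apply, PiLp.smul_apply,
    smul_eq_mul]
  ring

/-- `[c, d]` is the edge of the cone over `B` along which its boundary, oriented with `B` on the
left, leaves the closed half-space `0 ≤ ⟪v, ·⟫`. -/
structure IsCrossingEdge (B : Set E3) (v c d : E3) : Prop where
  c_mem : c ∈ B
  d_mem : d ∈ B
  inner_c_nonneg : 0 ≤ ⟪v, c⟫
  inner_d_neg : ⟪v, d⟫ < 0
  det3_pos : ∀ x ∈ B, x ≠ c → x ≠ d → 0 < det3 c d x

namespace IsCrossingEdge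

variable {B : Set E3} {v c d c' d' : E3}

lemma det3_crossingPoint_pos (h : IsCrossingEdge B v c d) (hc' : c' ∈ B) (hd' : d' ∈ B)
    (hvc' : 0 ≤ ⟪v, c'⟫) (hvd' : ⟪v, d'⟫ < 0) (hcc : c' ≠ c) (hdd : d' ≠ d) :
    0 < det3 (crossingPoint v c d) (crossingPoint v c' d') v := by
  obtain ⟨-, -, hvc, hvd, hleft⟩ := h
  have hvv : 0 < ⟪v, v⟫ := real_inner_self_pos.mpr fun h => by simp [h] at hvd
  have hc'd : c' ≠ d := fun e => by rw [e] at hvc'; linarith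
  have hd'c : d' ≠ c := fun e => by rw [e] at hvd'; linarith
  rw [det3_crossingPoint, inner_crossingPoint, mul_zero, sub_zero, crossingPoint,
    det3_smul_add_smul]
  exact mul_pos hvv (add_pos_of_pos_of_nonneg (mul_pos (by linarith) (hleft c' hc' hcc hc'd))
    (mul_nonneg hvc' (hleft d' hd' hd'c hdd).le))

lemma unique (h : IsCrossingEdge B v c d) (h' : IsCrossingEdge B v c' d') : c' = c ∧ d' = d := by
  have hc'd : c' ≠ d := fun e => (e ▸ h'.inner_c_nonneg).not_gt h.inner_d_neg
  have hd'c : d' ≠ c := fun e => (e ▸ h.inner_c_nonneg).not_gt h'.inner_d_neg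
  by_cases hc : c' = c
  · subst hc
    refine ⟨rfl, by_contra fun hd => ?_⟩
    have := h.det3_pos d' h'.d_mem hd'c hd
    have := h'.det3_pos d h.d_mem hc'd.symm (Ne.symm hd)
    rw [det3_swap_right] at this
    linarith
  by_cases hd : d' = d
  · subst hd
    have := h.det3_pos c' h'.c_mem hc hc'd
    have := h'.det3_pos c h.c_mem (Ne.symm hc) hd'c.symm
    rw [det3_rotate, det3_swap_right] at this
    linarith
  have := h.det3_crossingPoint_pos h'.c_mem h'.d_mem h'.inner_c_nonneg h'.inner_d_neg hc hd
  have := h'.det3_crossingPoint_pos h.c_mem h.d_mem h.inner_c_nonneg h.inner_d_neg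
    (Ne.symm hc) (Ne.symm hd)
  rw [det3_swap_left] at this
  linarith

lemma image {g : E3 → E3} (h : IsCrossingEdge B v c d) (hbij : Set.BijOn g B B)
    (hpres : OrientationPreservingOn g B) (hside : ∀ x ∈ B, 0 ≤ ⟪v, g x⟫ ↔ 0 ≤ ⟪v, x⟫) :
    IsCrossingEdge B v (g c) (g d) := by
  obtain ⟨hc, hd, hvc, hvd, hleft⟩ := h
  refine ⟨hbij.mapsTo hc, hbij.mapsTo hd, (hside c hc).mpr hvc,
    lt_of_not_ge fun h => (hside d hd).mp h |>.not_gt hvd, fun x hx hxc hxd => ?_⟩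
  obtain ⟨y, hy, rfl⟩ := hbij.surjOn hx
  exact hpres.det3_pos hc hd hy (hleft y hy (fun e => hxc (e ▸ rfl)) fun e => hxd (e ▸ rfl))

end IsCrossingEdge

/-- The crossing edge is found as the pair `(c, d)` whose crossing point has the largest slope
about `v`; ties, which occur when `c` lies on the plane `⟪v, ·⟫ = 0`, are broken by the slope
of `d` about `c`. -/
lemma exists_isCrossingEdge {B : Set E3} {u v a b : E3} (hfin : B.Finite) (hgp : GenPos B)
    (hu : ∀ x ∈ B, 0 < ⟪u, x⟫) (ha : a ∈ B) (hva : 0 ≤ ⟪v, a⟫) (hb : b ∈ B)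
    (hvb : ⟪v, b⟫ < 0) :
    ∃ c d, IsCrossingEdge B v c d := by
  have hvv : 0 < ⟪v, v⟫ := real_inner_self_pos.mpr fun h => by simp [h] at hvb
  set w := ⟪v, v⟫ • u - ⟪u, v⟫ • v
  have hwv : ⟪w, v⟫ = 0 := by
    simp only [w, inner_sub_left, real_inner_smul_left]; ring
  have hw : ∀ c ∈ B, ∀ d ∈ B, 0 ≤ ⟪v, c⟫ → ⟪v, d⟫ < 0 → 0 < ⟪w, crossingPoint v c d⟫ := by
    intro c hc d hd hvc hvd
    have hu' : 0 < ⟪u, crossingPoint v c d⟫ := by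
      simp only [crossingPoint, inner_add_right, real_inner_smul_right]
      nlinarith [hu c hc, hu d hd]
    simp only [w, inner_sub_left, real_inner_smul_left, inner_crossingPoint, mul_zero, sub_zero]
    positivity
  have hslope_lt : ∀ c ∈ B, ∀ d ∈ B, ∀ c' ∈ B, ∀ d' ∈ B, 0 ≤ ⟪v, c⟫ → ⟪v, d⟫ < 0 →
      0 ≤ ⟪v, c'⟫ → ⟪v, d'⟫ < 0 → det3 c d (crossingPoint v c' d') < 0 →
      slopeAbout w v (crossingPoint v c d) < slopeAbout w v (crossingPoint v c' d') := by
    intro c hc d hd c' hc' d' hd' hvc hvd hvc' hvd' hdet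
    refine (slopeAbout_lt_slopeAbout_iff hwv (hw c' hc' d' hd' hvc' hvd')
      (hw c hc d hd hvc hvd)).mpr ?_
    rw [det3_rotate, det3_swap_right, det3_crossingPoint, inner_crossingPoint]
    nlinarith
  set P := {p : E3 × E3 | p.1 ∈ B ∧ p.2 ∈ B ∧ 0 ≤ ⟪v, p.1⟫ ∧ ⟪v, p.2⟫ < 0}
  obtain ⟨⟨c, d⟩, ⟨hc, hd, hvc, hvd⟩, hmax⟩ := Set.exists_max_image P
    (fun p => toLex (slopeAbout w v (crossingPoint v p.1 p.2), slopeAbout (-v) p.1 p.2))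
    ((hfin.prod hfin).subset fun p hp => ⟨hp.1, hp.2.1⟩) ⟨(a, b), ha, hb, hva, hvb⟩
  refine ⟨c, d, hc, hd, hvc, hvd, fun x hx hxc hxd => ?_⟩
  have hcd : c ≠ d := fun e => by rw [e] at hvc; linarith
  by_contra hnot
  have hdet : det3 c d x < 0 :=
    (not_lt.mp hnot).lt_of_ne (hgp c hc d hd x hx hcd (Ne.symm hxc) (Ne.symm hxd))
  rcases le_or_gt 0 ⟪v, x⟫ with hvx | hvx
  · refine (hmax (x, d) ⟨hx, hd, hvx, hvd⟩).not_gt (Prod.Lex.toLex_lt_toLex.mpr (.inl ?_))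
    refine hslope_lt c hc d hd x hx d hd hvc hvd hvx hvd ?_
    rw [crossingPoint, det3_smul_add_smul, det3_self_second_third]
    nlinarith
  rcases hvc.lt_or_eq with hvc | hvc
  · refine (hmax (c, x) ⟨hc, hx, hvc.le, hvx⟩).not_gt (Prod.Lex.toLex_lt_toLex.mpr (.inl ?_))
    refine hslope_lt c hc d hd c hc x hx hvc.le hvd hvc.le hvx ?_
    rw [crossingPoint, det3_smul_add_smul, det3_self_first_third]
    nlinarith
  · refine (hmax (c, x) ⟨hc, hx, hvc.le, hvx⟩).not_gt (Prod.Lex.toLex_lt_toLex.mpr (.inr ⟨?_, ?_⟩))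
    · simp only [crossingPoint, ← hvc, zero_smul, add_zero]
      rw [slopeAbout_smul _ _ _ (by linarith), slopeAbout_smul _ _ _ (by linarith)]
    · refine (slopeAbout_lt_slopeAbout_iff (by rw [inner_neg_left, ← hvc, neg_zero])
        (by rw [inner_neg_left]; linarith) (by rw [inner_neg_left]; linarith)).mpr ?_
      rw [det3_swap_right]
      linarith

theorem stmt11_general (B : Set E3) (hB : IsAffineSet B) (hgp : GenPos B)
    (g : E3 → E3) (hbij : Set.BijOn g B B) (hpres : OrientationPreservingOn g B)
    (hne : ∃ p ∈ B, g p ≠ p)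
    (v : E3)
    (hstab : g '' (B ∩ {x : E3 | 0 ≤ ⟪v, x⟫}) = B ∩ {x : E3 | 0 ≤ ⟪v, x⟫}) :
    (∀ p ∈ B, 0 ≤ ⟪v, p⟫) ∨ (∀ p ∈ B, ⟪v, p⟫ ≤ (0 : ℝ)) := by
  obtain ⟨hfin, -, u, hu⟩ := hB
  have hside : ∀ x ∈ B, 0 ≤ ⟪v, g x⟫ ↔ 0 ≤ ⟪v, x⟫ :=
    fun x hx => hbij.apply_mem_iff_of_image_inter_eq hstab hx
  by_contra! hcon
  obtain ⟨⟨b, hb, hvb⟩, a, ha, hva⟩ := hcon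
  obtain ⟨c, d, hcd⟩ := exists_isCrossingEdge hfin hgp hu ha hva.le hb hvb
  obtain ⟨hgc, hgd⟩ := hcd.unique (hcd.image hbij hpres hside)
  obtain ⟨hc, hd, hvc, hvd, -⟩ := hcd
  obtain ⟨p, hp, hmoved⟩ := hne
  refine hmoved ?_
  by_cases hvp : 0 ≤ ⟪v, p⟫
  · refine apply_eq_self_of_halfspace_through_fixed_point (S := {x | 0 ≤ ⟪v, x⟫}) hfin hgp
      hbij hpres hside hd hgd
      (w := ⟪u, d⟫ • v - ⟪v, d⟫ • u) ?_ (fun x hx hvx => ?_) p hp hvp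
    · simp only [inner_sub_left, real_inner_smul_left]; ring
    · simp only [inner_sub_left, real_inner_smul_left]
      nlinarith [hu x hx, hu d hd, mul_nonneg (hu d hd).le (show 0 ≤ ⟪v, x⟫ from hvx)]
  · refine apply_eq_self_of_halfspace_through_fixed_point (S := {x | 0 ≤ ⟪v, x⟫}ᶜ) hfin hgp
      hbij hpres (fun x hx => not_congr (hside x hx)) hc hgc
      (w := ⟪v, c⟫ • u - ⟪u, c⟫ • v) ?_ (fun x hx hvx => ?_) p hp hvp
    · simp only [inner_sub_left, real_inner_smul_left]; ring
    · simp only [inner_sub_left, real_inner_smul_left]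
      have hvx : ⟪v, x⟫ < 0 := not_le.mp hvx
      nlinarith [hu x hx, hu c hc, mul_nonneg hvc (hu x hx).le]

/-- Let `B` be an affine set in general position, `g ≠ id` a symmetry of
`B`, and `H = {x | 0 ≤ ⟪v, x⟫}` a closed hemisphere with `g (B ∩ H) = B ∩ H`. Then
`B ⊆ H` or `B ⊆ −H`. -/
theorem stmt11 (B : Set E3) (hB : IsAffineSet B) (hgp : GenPos B)
    (g : E3 → E3) (hbij : Set.BijOn g B B) (hpres : OrientationPreservingOn g B)
    (hne : ∃ p ∈ B, g p ≠ p)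
    (v : E3) (hv : v ≠ 0)
    (hstab : g '' (B ∩ {x : E3 | 0 ≤ ⟪v, x⟫}) = B ∩ {x : E3 | 0 ≤ ⟪v, x⟫}) :
    (∀ p ∈ B, 0 ≤ ⟪v, p⟫) ∨ (∀ p ∈ B, ⟪v, p⟫ ≤ (0 : ℝ)) :=
  stmt11_general B hB hgp g hbij hpres hne v hstab
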